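/- (Hyperbolic form of the first law with body forces and heat sources, equation (A3).) Let ρ₀ > 0 be a constant, e : ℝ × ℝ → ℝ smooth, and u, s, q, b, r : ℝ × ℝ → ℝ smooth (displacement, entropy density, heat flux, body force, heat source). Define v = ∂ₜu, S = ρ₀·∂₁e(∂ₓu, s), θ = ∂₂e(∂ₓu, s), I = e(∂ₓu, s) + v²/2, c = ρ₀·∂₁₁e(∂ₓu, s), Ḋ = ρ₀·∂₁₂e(∂ₓu, s)·v·∂ₜs + ∂ₓs·( S·∂₁₂e(∂ₓu, s) − θ·ρ₀·∂₁₁e(∂ₓu, s) ) − ∂ₜq, and Ḃ = −ρ₀·∂ₜ( v·b + r ). If both the balance of momentum ρ₀·∂ₜv = ∂ₓS and the first law of thermodynamics with sources ρ₀·∂ₜI = ∂ₓ( v·S − q ) + ρ₀·v·b + ρ₀·r hold at every point, then the total energy satisfies ρ₀·∂ₜₜI = ∂ₓ( c·∂ₓI ) + ∂ₓḊ − Ḃ at every point. -/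

import Mathlib

open MeasureTheory

/-- Partial derivative in the first variable. -/
noncomputable def dX (f : ℝ × ℝ → ℝ) : ℝ × ℝ → ℝ := fun p => deriv (fun x => f (x, p.2)) p.1

/-- Partial derivative in the second variable. -/
noncomputable def dT (f : ℝ × ℝ → ℝ) : ℝ × ℝ → ℝ := fun p => deriv (fun t => f (p.1, t)) p.2


section helpers
variable {f g : ℝ × ℝ → ℝ}

lemma diffX (hf : ContDiff ℝ (⊤ : ℕ∞) f) (p : ℝ × ℝ) : DifferentiableAt ℝ (fun x => f (x, p.2)) p.1 :=
  ((hf.differentiable (by simp)).comp (differentiable_id.prodMk (differentiable_const _))).differentiableAt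

lemma diffT (hf : ContDiff ℝ (⊤ : ℕ∞) f) (p : ℝ × ℝ) : DifferentiableAt ℝ (fun t => f (p.1, t)) p.2 :=
  ((hf.differentiable (by simp)).comp ((differentiable_const _).prodMk differentiable_id)).differentiableAt

lemma hasDerivAt_X (hf : ContDiff ℝ (⊤ : ℕ∞) f) (p : ℝ × ℝ) :
    HasDerivAt (fun x => f (x, p.2)) (dX f p) p.1 := (diffX hf p).hasDerivAt

lemma hasDerivAt_T (hf : ContDiff ℝ (⊤ : ℕ∞) f) (p : ℝ × ℝ) :
    HasDerivAt (fun t => f (p.1, t)) (dT f p) p.2 := (diffT hf p).hasDerivAt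

lemma dX_eq (hf : ContDiff ℝ (⊤ : ℕ∞) f) (p : ℝ × ℝ) : dX f p = fderiv ℝ f p (1, 0) := by
  have h1 : HasDerivAt (fun x : ℝ => (x, p.2)) ((1 : ℝ), (0 : ℝ)) p.1 :=
    (hasDerivAt_id p.1).prodMk (hasDerivAt_const _ _)
  have h2 := (((hf.differentiable (by simp) p).hasFDerivAt).comp_hasDerivAt p.1 h1).deriv
  simpa [dX, Function.comp_def] using h2

lemma dT_eq (hf : ContDiff ℝ (⊤ : ℕ∞) f) (p : ℝ × ℝ) : dT f p = fderiv ℝ f p (0, 1) := by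
  have h1 : HasDerivAt (fun t : ℝ => (p.1, t)) ((0 : ℝ), (1 : ℝ)) p.2 :=
    (hasDerivAt_const _ _).prodMk (hasDerivAt_id p.2)
  have h2 := (((hf.differentiable (by simp) p).hasFDerivAt).comp_hasDerivAt p.2 h1).deriv
  simpa [dT, Function.comp_def] using h2

lemma contDiff_dX (hf : ContDiff ℝ (⊤ : ℕ∞) f) : ContDiff ℝ (⊤ : ℕ∞) (dX f) := by
  have : dX f = fun p => fderiv ℝ f p (1, 0) := funext (dX_eq hf)
  rw [this]
  exact (hf.fderiv_right (by simp)).clm_apply contDiff_const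

lemma contDiff_dT (hf : ContDiff ℝ (⊤ : ℕ∞) f) : ContDiff ℝ (⊤ : ℕ∞) (dT f) := by
  have : dT f = fun p => fderiv ℝ f p (0, 1) := funext (dT_eq hf)
  rw [this]
  exact (hf.fderiv_right (by simp)).clm_apply contDiff_const

lemma dT_comp2 (e : ℝ × ℝ → ℝ) (he : ContDiff ℝ (⊤ : ℕ∞) e) (hf : ContDiff ℝ (⊤ : ℕ∞) f) (hg : ContDiff ℝ (⊤ : ℕ∞) g)
    (p : ℝ × ℝ) :
    dT (fun q => e (f q, g q)) p = dX e (f p, g p) * dT f p + dT e (f p, g p) * dT g p := by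
  have hln : HasDerivAt (fun t => (f (p.1, t), g (p.1, t))) (dT f p, dT g p) p.2 :=
    (hasDerivAt_T hf p).prodMk (hasDerivAt_T hg p)
  have h2 := (((he.differentiable (by simp) (f p, g p)).hasFDerivAt).comp_hasDerivAt p.2 hln).deriv
  have h3 : dT (fun q => e (f q, g q)) p = fderiv ℝ e (f p, g p) (dT f p, dT g p) := by
    simpa [dT, Function.comp_def] using h2
  rw [h3, dX_eq he, dT_eq he]
  have hsplit : ((dT f p, dT g p) : ℝ × ℝ) = dT f p • ((1 : ℝ), (0 : ℝ)) + dT g p • ((0 : ℝ), (1 : ℝ)) := by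
    simp [Prod.ext_iff]
  rw [hsplit, map_add, _root_.map_smul, _root_.map_smul, smul_eq_mul, smul_eq_mul]
  ring

lemma dX_comp2 (e : ℝ × ℝ → ℝ) (he : ContDiff ℝ (⊤ : ℕ∞) e) (hf : ContDiff ℝ (⊤ : ℕ∞) f) (hg : ContDiff ℝ (⊤ : ℕ∞) g)
    (p : ℝ × ℝ) :
    dX (fun q => e (f q, g q)) p = dX e (f p, g p) * dX f p + dT e (f p, g p) * dX g p := by
  have hln : HasDerivAt (fun x => (f (x, p.2), g (x, p.2))) (dX f p, dX g p) p.1 :=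
    (hasDerivAt_X hf p).prodMk (hasDerivAt_X hg p)
  have h2 := (((he.differentiable (by simp) (f p, g p)).hasFDerivAt).comp_hasDerivAt p.1 hln).deriv
  have h3 : dX (fun q => e (f q, g q)) p = fderiv ℝ e (f p, g p) (dX f p, dX g p) := by
    simpa [dX, Function.comp_def] using h2
  rw [h3, dX_eq he, dT_eq he]
  have hsplit : ((dX f p, dX g p) : ℝ × ℝ) = dX f p • ((1 : ℝ), (0 : ℝ)) + dX g p • ((0 : ℝ), (1 : ℝ)) := by
    simp [Prod.ext_iff]
  rw [hsplit, map_add, _root_.map_smul, _root_.map_smul, smul_eq_mul, smul_eq_mul]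
  ring

lemma dT_add (hf : ContDiff ℝ (⊤ : ℕ∞) f) (hg : ContDiff ℝ (⊤ : ℕ∞) g) (p : ℝ × ℝ) :
    dT (fun q => f q + g q) p = dT f p + dT g p := deriv_add (diffT hf p) (diffT hg p)

lemma dX_add (hf : ContDiff ℝ (⊤ : ℕ∞) f) (hg : ContDiff ℝ (⊤ : ℕ∞) g) (p : ℝ × ℝ) :
    dX (fun q => f q + g q) p = dX f p + dX g p := deriv_add (diffX hf p) (diffX hg p)

lemma dT_sub (hf : ContDiff ℝ (⊤ : ℕ∞) f) (hg : ContDiff ℝ (⊤ : ℕ∞) g) (p : ℝ × ℝ) :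
    dT (fun q => f q - g q) p = dT f p - dT g p := deriv_sub (diffT hf p) (diffT hg p)

lemma dT_mul (hf : ContDiff ℝ (⊤ : ℕ∞) f) (hg : ContDiff ℝ (⊤ : ℕ∞) g) (p : ℝ × ℝ) :
    dT (fun q => f q * g q) p = dT f p * g p + f p * dT g p := deriv_mul (diffT hf p) (diffT hg p)

lemma dT_const_mul (c : ℝ) (hf : ContDiff ℝ (⊤ : ℕ∞) f) (p : ℝ × ℝ) :
    dT (fun q => c * f q) p = c * dT f p := deriv_const_mul c (diffT hf p)

lemma dX_const_mul (c : ℝ) (hf : ContDiff ℝ (⊤ : ℕ∞) f) (p : ℝ × ℝ) :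
    dX (fun q => c * f q) p = c * dX f p := deriv_const_mul c (diffX hf p)

lemma dX_sq_half (hf : ContDiff ℝ (⊤ : ℕ∞) f) (p : ℝ × ℝ) :
    dX (fun q => f q ^ 2 / 2) p = f p * dX f p := by
  have h := (((hasDerivAt_X hf p).pow 2).div_const 2).deriv
  have h2 : dX (fun q => f q ^ 2 / 2) p = (↑2 * f (p.1, p.2) ^ (2 - 1) * dX f p) / 2 := h
  rw [h2]
  ring

lemma dT_dX_comm (hf : ContDiff ℝ (⊤ : ℕ∞) f) (p : ℝ × ℝ) : dT (dX f) p = dX (dT f) p := by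
  have hdf : ContDiff ℝ (⊤ : ℕ∞) (fderiv ℝ f) := hf.fderiv_right (by simp)
  have hsym := second_derivative_symmetric
    (f' := fderiv ℝ f) (f'' := fderiv ℝ (fderiv ℝ f) p) (x := p)
    (fun y => (hf.differentiable (by simp) y).hasFDerivAt)
    ((hdf.differentiable (by simp) p).hasFDerivAt)
  have happ : ∀ w u : ℝ × ℝ, fderiv ℝ (fun y => fderiv ℝ f y w) p u
      = fderiv ℝ (fderiv ℝ f) p u w := by
    intro w u
    have hc := ((ContinuousLinearMap.apply ℝ ℝ w).hasFDerivAt.comp p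
      (hdf.differentiable (by simp) p).hasFDerivAt).fderiv
    calc fderiv ℝ (fun y => fderiv ℝ f y w) p u
        = fderiv ℝ ((ContinuousLinearMap.apply ℝ ℝ w) ∘ (fderiv ℝ f)) p u := rfl
      _ = ((ContinuousLinearMap.apply ℝ ℝ w).comp (fderiv ℝ (fderiv ℝ f) p)) u := by rw [hc]
      _ = fderiv ℝ (fderiv ℝ f) p u w := rfl
  have e1 : dX f = fun q => fderiv ℝ f q (1, 0) := funext (dX_eq hf)
  have e2 : dT f = fun q => fderiv ℝ f q (0, 1) := funext (dT_eq hf)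
  rw [dT_eq (contDiff_dX hf), dX_eq (contDiff_dT hf), e1, e2, happ, happ, hsym]
end helpers

/-- Equation (A3) (hyperbolic form of the first law with body forces and heat sources):
under balance of momentum and ρ₀ ∂ₜI = ∂ₓ(vS − q) + ρ₀vb + ρ₀r, the total energy
satisfies ρ₀ ∂ₜₜI = ∂ₓ(c ∂ₓI) + ∂ₓḊ − Ḃ, where Ḃ = −ρ₀ ∂ₜ(vb + r).
Here dX e = ∂₁e, dT e = ∂₂e, dX (dX e) = ∂₁₁e, dT (dX e) = ∂₁₂e. -/
theorem first_law_hyperbolic_with_sources (ρ₀ : ℝ) (hρ : 0 < ρ₀)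
    (e : ℝ × ℝ → ℝ) (he : ContDiff ℝ (⊤ : ℕ∞) e)
    (u s q b r : ℝ × ℝ → ℝ)
    (hu : ContDiff ℝ (⊤ : ℕ∞) u) (hs : ContDiff ℝ (⊤ : ℕ∞) s) (hq : ContDiff ℝ (⊤ : ℕ∞) q)
    (hb : ContDiff ℝ (⊤ : ℕ∞) b) (hr : ContDiff ℝ (⊤ : ℕ∞) r)
    (v S θ I c D B : ℝ × ℝ → ℝ)
    (hv : v = dT u)
    (hS : S = fun p => ρ₀ * dX e (dX u p, s p))
    (hθ : θ = fun p => dT e (dX u p, s p))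
    (hI : I = fun p => e (dX u p, s p) + (v p) ^ 2 / 2)
    (hc : c = fun p => ρ₀ * dX (dX e) (dX u p, s p))
    (hD : D = fun p => ρ₀ * dT (dX e) (dX u p, s p) * v p * dT s p
        + dX s p * (S p * dT (dX e) (dX u p, s p) - θ p * (ρ₀ * dX (dX e) (dX u p, s p)))
        - dT q p)
    (hB : B = fun p => -(ρ₀ * dT (fun r' => v r' * b r' + r r') p))
    (hmom : ∀ p : ℝ × ℝ, ρ₀ * dT v p = dX S p)
    (hfirstlaw : ∀ p : ℝ × ℝ,
      ρ₀ * dT I p = dX (fun r' => v r' * S r' - q r') p + ρ₀ * v p * b p + ρ₀ * r p) :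
    ∀ p : ℝ × ℝ,
      ρ₀ * dT (dT I) p = dX (fun r' => c r' * dX I r') p + dX D p - B p := by
  -- smoothness package
  have hdxu : ContDiff ℝ (⊤ : ℕ∞) (dX u) := contDiff_dX hu
  have hw : ContDiff ℝ (⊤ : ℕ∞) (fun p => ((dX u p, s p) : ℝ × ℝ)) := hdxu.prodMk hs
  have he1 : ContDiff ℝ (⊤ : ℕ∞) (dX e) := contDiff_dX he
  have he2 : ContDiff ℝ (⊤ : ℕ∞) (dT e) := contDiff_dT he
  have he11 : ContDiff ℝ (⊤ : ℕ∞) (dX (dX e)) := contDiff_dX he1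
  have he12 : ContDiff ℝ (⊤ : ℕ∞) (dT (dX e)) := contDiff_dT he1
  have hv' : ContDiff ℝ (⊤ : ℕ∞) v := hv ▸ contDiff_dT hu
  have hS' : ContDiff ℝ (⊤ : ℕ∞) S := by rw [hS]; exact contDiff_const.mul (he1.comp hw)
  have hθ' : ContDiff ℝ (⊤ : ℕ∞) θ := by rw [hθ]; exact he2.comp hw
  have hI' : ContDiff ℝ (⊤ : ℕ∞) I := by rw [hI]; exact (he.comp hw).add ((hv'.pow 2).div_const 2)
  have hc' : ContDiff ℝ (⊤ : ℕ∞) c := by rw [hc]; exact contDiff_const.mul (he11.comp hw)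
  have hD' : ContDiff ℝ (⊤ : ℕ∞) D := by
    rw [hD]
    exact ((((contDiff_const.mul (he12.comp hw)).mul hv').mul (contDiff_dT hs)).add
      ((contDiff_dX hs).mul ((hS'.mul (he12.comp hw)).sub
        (hθ'.mul (contDiff_const.mul (he11.comp hw)))))).sub (contDiff_dT hq)
  have hG : ContDiff ℝ (⊤ : ℕ∞) (fun p => v p * S p - q p) := (hv'.mul hS').sub hq
  -- derivative formulas
  have hdTS : ∀ p, dT S p
      = ρ₀ * (dX (dX e) (dX u p, s p) * dX v p + dT (dX e) (dX u p, s p) * dT s p) := by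
    intro p
    have h0 : dT S p = dT (fun p => ρ₀ * dX e (dX u p, s p)) p := by rw [hS]
    have h1 : dT (fun p => ρ₀ * dX e (dX u p, s p)) p
        = ρ₀ * dT (fun p => dX e (dX u p, s p)) p := dT_const_mul ρ₀ (he1.comp hw) p
    rw [h0, h1, dT_comp2 (dX e) he1 hdxu hs, dT_dX_comm hu p, ← hv]
  have hdXS : ∀ p, dX S p
      = ρ₀ * (dX (dX e) (dX u p, s p) * dX (dX u) p + dT (dX e) (dX u p, s p) * dX s p) := by
    intro p
    have h0 : dX S p = dX (fun p => ρ₀ * dX e (dX u p, s p)) p := by rw [hS]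
    have h1 : dX (fun p => ρ₀ * dX e (dX u p, s p)) p
        = ρ₀ * dX (fun p => dX e (dX u p, s p)) p := dX_const_mul ρ₀ (he1.comp hw) p
    rw [h0, h1, dX_comp2 (dX e) he1 hdxu hs]
  have hmom' : ∀ p, dT v p
      = dX (dX e) (dX u p, s p) * dX (dX u) p + dT (dX e) (dX u p, s p) * dX s p := by
    intro p
    have h := hmom p
    rw [hdXS p] at h
    exact mul_left_cancel₀ (ne_of_gt hρ) h
  have hdXI : ∀ p, dX I p
      = dX e (dX u p, s p) * dX (dX u) p + dT e (dX u p, s p) * dX s p + v p * dX v p := by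
    intro p
    have h0 : dX I p = dX (fun y => e (dX u y, s y)) p + dX (fun y => v y ^ 2 / 2) p := by
      rw [hI]; exact dX_add (he.comp hw) ((hv'.pow 2).div_const 2) p
    rw [h0, dX_comp2 e he hdxu hs, dX_sq_half hv']
  -- key pointwise identity (A2-type): ∂ₜ(vS - q) = c ∂ₓI + D
  have keyA : ∀ p, dT (fun r' => v r' * S r' - q r') p = c p * dX I p + D p := by
    intro p
    have h1 : dT (fun r' => v r' * S r' - q r') p = dT (fun r' => v r' * S r') p - dT q p :=
      dT_sub (hv'.mul hS') hq p
    have h2 : dT (fun r' => v r' * S r') p = dT v p * S p + v p * dT S p := dT_mul hv' hS' p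
    rw [h1, h2, hdTS p, hmom' p, hdXI p]
    simp only [hc, hD, hθ, hS]
    ring
  have hdTG : dT (fun r' => v r' * S r' - q r') = fun p => c p * dX I p + D p := funext keyA
  -- differentiate the first law in time
  intro p
  have hFL : (fun p => ρ₀ * dT I p)
      = (fun p => dX (fun r' => v r' * S r' - q r') p + ρ₀ * (v p * b p + r p)) :=
    funext fun p => by rw [hfirstlaw p]; ring
  have h3 := congrArg (fun F => dT F p) hFL
  have h4 : dT (fun y => ρ₀ * dT I y) p = ρ₀ * dT (dT I) p := dT_const_mul ρ₀ (contDiff_dT hI') p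
  have h5 : dT (fun y => dX (fun r' => v r' * S r' - q r') y + ρ₀ * (v y * b y + r y)) p
      = dT (dX (fun r' => v r' * S r' - q r')) p + dT (fun y => ρ₀ * (v y * b y + r y)) p :=
    dT_add (contDiff_dX hG) (contDiff_const.mul ((hv'.mul hb).add hr)) p
  have h6 : dT (fun y => ρ₀ * (v y * b y + r y)) p = ρ₀ * dT (fun y => v y * b y + r y) p :=
    dT_const_mul ρ₀ ((hv'.mul hb).add hr) p
  have h7 : dT (dX (fun r' => v r' * S r' - q r')) p = dX (dT (fun r' => v r' * S r' - q r')) p :=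
    dT_dX_comm hG p
  have h8 : dX (fun y => c y * dX I y + D y) p = dX (fun r' => c r' * dX I r') p + dX D p :=
    dX_add (hc'.mul (contDiff_dX hI')) hD' p
  have h9 : B p = -(ρ₀ * dT (fun r' => v r' * b r' + r r') p) := by rw [hB]
  rw [h4, h5, h6, h7, hdTG, h8] at h3
  rw [h3, h9]
  ring
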